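/- arXiv:1211.1224 — 3 statements merged into one kernel-verified Lean document; each statement's English description precedes it below -/
import Mathlib

section
/- In an out-j collapsible pair (C, D) with D nonempty, the number of outwardly matched j-faces of D equals (-1)^j · (χ(D) − 1), where χ denotes the Euler characteristic; in particular this number is independent of the chosen out-j collapsing sequence. -/
set_option maxHeartbeats 2000000


/-- An abstract (finite, graded) face poset carrying a dimension function and a
codimension-one face ("facet") relation, modelling the combinatorics of a
finite regular CW complex. -/
structure MorseSetup (F : Type) where
  dim : F → ℕ
  facet : F → F → Prop
  facet_dim : ∀ σ τ, facet σ τ → dim τ = dim σ + 1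

/-- A discrete vector field: pairs `(σ, Σ)` with `σ` a codimension-one face of `Σ`,
no face belonging to two different pairs. -/
def IsDVF {F : Type} (S : MorseSetup F) (Φ : Finset (F × F)) : Prop :=
  (∀ p ∈ Φ, S.facet p.1 p.2) ∧
  ∀ p ∈ Φ, ∀ q ∈ Φ, p ≠ q → p.1 ≠ q.1 ∧ p.1 ≠ q.2 ∧ p.2 ≠ q.1 ∧ p.2 ≠ q.2

/-- Existence of a closed gradient path `(σ_0,Σ_0),…,(σ_k,Σ_k)`, `k ≥ 1`,
with `σ_{i+1} ≠ σ_i`, `σ_{i+1}` a facet of `Σ_i` and `σ_0 = σ_k`. -/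
def HasClosedGradientPath {F : Type} (S : MorseSetup F) (Φ : Finset (F × F)) : Prop :=
  ∃ (k : ℕ) (σ T : ℕ → F), 1 ≤ k ∧
    (∀ i ≤ k, (σ i, T i) ∈ Φ) ∧
    (∀ i < k, σ (i + 1) ≠ σ i ∧ S.facet (σ (i + 1)) (T i)) ∧
    σ 0 = σ k

/-- A Morse matching is a discrete vector field without closed gradient paths. -/
def IsMorseMatching {F : Type} (S : MorseSetup F) (Φ : Finset (F × F)) : Prop :=
  IsDVF S Φ ∧ ¬ HasClosedGradientPath S Φ

/-- A face is critical if it belongs to no matching pair. -/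
def IsCritical {F : Type} (Φ : Finset (F × F)) (x : F) : Prop :=
  ∀ p ∈ Φ, x ≠ p.1 ∧ x ≠ p.2

/-- A face `τ` of the subcomplex `D` is outwardly matched if it is matched with
a face not belonging to `D`. -/
def OutwardlyMatched {F : Type} (Φ : Finset (F × F)) (D : Finset F) (τ : F) : Prop :=
  τ ∈ D ∧ ∃ p ∈ Φ, (p.1 = τ ∧ p.2 ∉ D) ∨ (p.2 = τ ∧ p.1 ∉ D)

/-- A collapsing sequence from the whole complex to the vertex `v`: a Morse matching
whose unique critical face is the vertex `v`. -/
def IsCollapsingSeq {F : Type} (S : MorseSetup F) (Φ : Finset (F × F)) (v : F) : Prop :=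
  IsMorseMatching S Φ ∧ S.dim v = 0 ∧ ∀ x, IsCritical Φ x ↔ x = v

/-- `(C, D)` is out-`j` collapsible via `Φ`: `Φ` is a collapsing sequence from `C`
to a vertex of `D` in which every outwardly matched face has dimension `j`. -/
def IsOutJCollapsingSeq {F : Type} (S : MorseSetup F) (Φ : Finset (F × F))
    (D : Finset F) (j : ℕ) : Prop :=
  (∃ v ∈ D, IsCollapsingSeq S Φ v) ∧ ∀ τ, OutwardlyMatched Φ D τ → S.dim τ = j

/-- `D` is a subcomplex: closed under passing to codimension-one faces. -/
def IsSubcomplex {F : Type} (S : MorseSetup F) (D : Finset F) : Prop :=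
  ∀ σ τ, S.facet σ τ → τ ∈ D → σ ∈ D

/-- In an out-`j` collapsible pair `(C, D)` with `D` nonempty, the number of
outwardly matched `j`-faces of `D` equals `(-1)^j · (χ(D) − 1)`; in particular it does not
depend on the chosen out-`j` collapsing sequence. -/
theorem stmt0 {F : Type} [Fintype F] [DecidableEq F] (S : MorseSetup F) (D : Finset F)
    (hD : IsSubcomplex S D) (hDne : D.Nonempty) (j : ℕ) (Φ : Finset (F × F))
    (hΦ : IsOutJCollapsingSeq S Φ D j) :
    (Nat.card {τ : F // OutwardlyMatched Φ D τ ∧ S.dim τ = j} : ℤ) =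
      (-1 : ℤ) ^ j * ((∑ τ ∈ D, (-1 : ℤ) ^ S.dim τ) - 1) := by
  classical
  obtain ⟨⟨v, hvD, ⟨⟨⟨hfac, hdisj⟩, _⟩, hvdim, hcrit⟩⟩, hout⟩ := hΦ
  -- each face lies in at most one pair
  have huniq : ∀ p ∈ Φ, ∀ q ∈ Φ,
      (p.1 = q.1 ∨ p.1 = q.2 ∨ p.2 = q.1 ∨ p.2 = q.2) → p = q := by
    intro p hp q hq h
    by_contra hne
    obtain ⟨h1, h2, h3, h4⟩ := hdisj p hp q hq hne
    tauto
  have hne12 : ∀ p ∈ Φ, p.1 ≠ p.2 := by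
    intro p hp h
    have h2 := S.facet_dim p.1 p.2 (hfac p hp)
    rw [h] at h2
    omega
  -- the partner function
  set g : F → F := fun τ =>
    if h : ∃ p ∈ Φ, τ = p.1 ∨ τ = p.2 then
      (if τ = h.choose.1 then h.choose.2 else h.choose.1)
    else τ with hgdef
  have hg : ∀ p ∈ Φ, g p.1 = p.2 ∧ g p.2 = p.1 := by
    intro p hp
    constructor
    · have h1 : ∃ q ∈ Φ, p.1 = q.1 ∨ p.1 = q.2 := ⟨p, hp, Or.inl rfl⟩
      simp only [hgdef, dif_pos h1]
      obtain ⟨hq, hor⟩ := h1.choose_spec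
      have : p = h1.choose := huniq p hp _ hq (by tauto)
      rw [if_pos (by rw [← this]), ← this]
    · have h2 : ∃ q ∈ Φ, p.2 = q.1 ∨ p.2 = q.2 := ⟨p, hp, Or.inr rfl⟩
      simp only [hgdef, dif_pos h2]
      obtain ⟨hq, hor⟩ := h2.choose_spec
      have hpe : p = h2.choose := huniq p hp _ hq (by tauto)
      rw [if_neg (by rw [← hpe]; exact fun h => hne12 p hp h.symm), ← hpe]
  set O : Finset F := D.filter (fun τ => OutwardlyMatched Φ D τ) with hO
  have hcard : (Nat.card {τ : F // OutwardlyMatched Φ D τ ∧ S.dim τ = j}) = O.card := by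
    rw [Nat.card_eq_fintype_card, Fintype.card_subtype]
    congr 1
    ext τ
    simp only [Finset.mem_filter, Finset.mem_univ, true_and, hO]
    constructor
    · rintro ⟨h, _⟩; exact ⟨h.1, h⟩
    · rintro ⟨_, h⟩; exact ⟨h, hout τ h⟩
  have hvO : v ∉ O := by
    simp only [hO, Finset.mem_filter, not_and]
    rintro _ ⟨_, p, hp, h⟩
    have := (hcrit v).mpr rfl p hp
    rcases h with ⟨h, _⟩ | ⟨h, _⟩ <;> [exact this.1 h.symm; exact this.2 h.symm]
  have hvDO : v ∈ D \ O := Finset.mem_sdiff.mpr ⟨hvD, hvO⟩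
  -- main sum computation
  have hsum : (∑ τ ∈ D, (-1 : ℤ) ^ S.dim τ) = 1 + (-1 : ℤ) ^ j * O.card := by
    have hsub : O ⊆ D := Finset.filter_subset _ _
    rw [← Finset.sum_sdiff hsub]
    have h1 : ∑ τ ∈ O, (-1 : ℤ) ^ S.dim τ = (-1 : ℤ) ^ j * O.card := by
      rw [Finset.sum_congr rfl (g := fun _ => (-1 : ℤ) ^ j)
        (fun τ hτ => by rw [hout τ (Finset.mem_filter.mp hτ).2])]
      rw [Finset.sum_const, nsmul_eq_mul, mul_comm]
    have h2 : ∑ τ ∈ D \ O, (-1 : ℤ) ^ S.dim τ = 1 := by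
      rw [← Finset.add_sum_erase _ _ hvDO, hvdim, pow_zero]
      have h0 : ∑ τ ∈ (D \ O).erase v, (-1 : ℤ) ^ S.dim τ = 0 := by
        apply Finset.sum_involution (fun a _ => g a)
        · -- f a + f (g a) = 0
          intro a ha
          obtain ⟨hav, haDO⟩ := Finset.mem_erase.mp ha
          have hnc : ¬ IsCritical Φ a := fun hc => hav ((hcrit a).mp hc)
          simp only [IsCritical, not_forall] at hnc
          obtain ⟨p, hp, hne⟩ := hnc
          have hor : a = p.1 ∨ a = p.2 := by tauto
          rcases hor with h | h
          · rw [h, (hg p hp).1, S.facet_dim p.1 p.2 (hfac p hp), pow_succ]; ring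
          · rw [h, (hg p hp).2, S.facet_dim p.1 p.2 (hfac p hp), pow_succ]; ring
        · -- g a ≠ a
          intro a ha _
          obtain ⟨hav, haDO⟩ := Finset.mem_erase.mp ha
          have hnc : ¬ IsCritical Φ a := fun hc => hav ((hcrit a).mp hc)
          simp only [IsCritical, not_forall] at hnc
          obtain ⟨p, hp, hne⟩ := hnc
          have hor : a = p.1 ∨ a = p.2 := by tauto
          rcases hor with h | h
          · rw [h, (hg p hp).1]; exact fun he => hne12 p hp he.symm
          · rw [h, (hg p hp).2]; exact hne12 p hp
        · -- g a ∈ s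
          intro a ha
          obtain ⟨hav, haDO⟩ := Finset.mem_erase.mp ha
          obtain ⟨haD, haO⟩ := Finset.mem_sdiff.mp haDO
          have hnc : ¬ IsCritical Φ a := fun hc => hav ((hcrit a).mp hc)
          simp only [IsCritical, not_forall] at hnc
          obtain ⟨p, hp, hne⟩ := hnc
          have hor : a = p.1 ∨ a = p.2 := by tauto
          have hnO : ¬ OutwardlyMatched Φ D a := by
            intro hOM
            exact haO (Finset.mem_filter.mpr ⟨haD, hOM⟩)
          simp only [OutwardlyMatched, not_and, not_exists] at hnO
          have hno := hnO haD p hp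
          -- partner of a
          rcases hor with h | h
          · -- a = p.1, partner = p.2
            have hp2D : p.2 ∈ D := by
              by_contra hc; exact hno (Or.inl ⟨h.symm, hc⟩)
            have hp2v : p.2 ≠ v := by
              intro he; exact ((hcrit v).mpr rfl p hp).2 he.symm
            have hp2O : p.2 ∉ O := by
              simp only [hO, Finset.mem_filter, not_and]
              rintro _ ⟨_, q, hq, hcase⟩
              have hpq : p = q := by
                apply huniq p hp q hq
                rcases hcase with ⟨h1, _⟩ | ⟨h1, _⟩
                · exact Or.inr (Or.inr (Or.inl h1.symm))
                · exact Or.inr (Or.inr (Or.inr h1.symm))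
              subst hpq
              rcases hcase with ⟨h1, h2⟩ | ⟨h1, h2⟩
              · exact hne12 p hp h1
              · exact h2 (h ▸ haD)
            rw [h, (hg p hp).1]
            exact Finset.mem_erase.mpr ⟨hp2v, Finset.mem_sdiff.mpr ⟨hp2D, hp2O⟩⟩
          · -- a = p.2, partner = p.1
            have hp1D : p.1 ∈ D := by
              by_contra hc; exact hno (Or.inr ⟨h.symm, hc⟩)
            have hp1v : p.1 ≠ v := by
              intro he; exact ((hcrit v).mpr rfl p hp).1 he.symm
            have hp1O : p.1 ∉ O := by
              simp only [hO, Finset.mem_filter, not_and]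
              rintro _ ⟨_, q, hq, hcase⟩
              have hpq : p = q := by
                apply huniq p hp q hq
                rcases hcase with ⟨h1, _⟩ | ⟨h1, _⟩
                · exact Or.inl h1.symm
                · exact Or.inr (Or.inl h1.symm)
              subst hpq
              rcases hcase with ⟨h1, h2⟩ | ⟨h1, h2⟩
              · exact h2 (h ▸ haD)
              · exact hne12 p hp h1.symm
            rw [h, (hg p hp).2]
            exact Finset.mem_erase.mpr ⟨hp1v, Finset.mem_sdiff.mpr ⟨hp1D, hp1O⟩⟩
        · -- g (g a) = a
          intro a ha
          obtain ⟨hav, haDO⟩ := Finset.mem_erase.mp ha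
          have hnc : ¬ IsCritical Φ a := fun hc => hav ((hcrit a).mp hc)
          simp only [IsCritical, not_forall] at hnc
          obtain ⟨p, hp, hne⟩ := hnc
          have hor : a = p.1 ∨ a = p.2 := by tauto
          rcases hor with h | h
          · rw [h, (hg p hp).1, (hg p hp).2]
          · rw [h, (hg p hp).2, (hg p hp).1]
      rw [h0, add_zero]
    rw [h1, h2]
  rw [hcard, hsum]
  have hsq : (-1 : ℤ) ^ j * (-1 : ℤ) ^ j = 1 := by
    rw [← pow_add]
    exact Even.neg_one_pow ⟨j, rfl⟩
  calc (O.card : ℤ) = ((-1 : ℤ) ^ j * (-1 : ℤ) ^ j) * O.card := by rw [hsq, one_mul]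
    _ = (-1 : ℤ) ^ j * (1 + (-1 : ℤ) ^ j * ↑O.card - 1) := by ring
end

section
/- The modified Hasse diagram of a discrete Morse matching is acyclic: if C is a finite regular CW complex and Φ a Morse matching on C, then the directed graph on the nonempty faces of C, with edges from Σ to its codimension-one faces σ except that matched pairs (σ,Σ) ∈ Φ have their edge reversed (from σ to Σ), contains no directed cycle. -/
private lemma transGen_chain {F : Type} {R : F → F → Prop} {x y : F}
    (h : Relation.TransGen R x y) :
    ∃ (n : ℕ) (f : ℕ → F), 1 ≤ n ∧ f 0 = x ∧ f n = y ∧ ∀ i < n, R (f i) (f (i + 1)) := by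
  induction h with
  | @single b h =>
    refine ⟨1, fun i => if i = 0 then x else b, le_refl 1, by simp, by simp, ?_⟩
    intro i hi
    interval_cases i
    simpa using h
  | @tail b c hxb hbc ih =>
    obtain ⟨n, f, hn, h0, hnb, hstep⟩ := ih
    refine ⟨n + 1, fun i => if i ≤ n then f i else c, by omega, ?_, ?_, ?_⟩
    · simp [h0]
    · have h2 : ¬ (n + 1 ≤ n) := by omega
      simp [h2]
    · intro i hi
      by_cases h : i < n
      · have e1 : i ≤ n := by omega
        have e2 : i + 1 ≤ n := by omega
        simpa [e1, e2] using hstep i h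
      · have e : i = n := by omega
        have e1 : i ≤ n := by omega
        have e2 : ¬ (i + 1 ≤ n) := by omega
        simp only [e1, e2, if_true, if_false, ite_true, ite_false, if_pos, if_neg, not_false_iff]
        rw [e, hnb]
        exact hbc

/-- The modified Hasse diagram of a discrete Morse matching is acyclic:
directing edges from each face to its codimension-one faces, except that edges of matched
pairs `(σ, Σ) ∈ Φ` are reversed (pointing from `σ` up to `Σ`), yields a directed graph
with no directed cycle. -/
theorem stmt6 {F : Type} [Fintype F] [DecidableEq F] (S : MorseSetup F) (Φ : Finset (F × F))
    (hΦ : IsMorseMatching S Φ) (x : F) :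
    ¬ Relation.TransGen
        (fun a b : F => (S.facet b a ∧ (b, a) ∉ Φ) ∨ (a, b) ∈ Φ) x x := by
  classical
  intro hcyc
  obtain ⟨n, f, hn, hf0, hfn, hstep⟩ := transGen_chain hcyc
  -- periodic extension
  set g : ℕ → F := fun i => f (i % n) with hg
  have hgn : ∀ i, g (i + n) = g i := by
    intro i; simp [hg, Nat.add_mod_right]
  have hgmod : ∀ i, g (i % n) = g i := by
    intro i; simp [hg, Nat.mod_mod_of_dvd _ (dvd_refl n)]
  have hgstep : ∀ i, (S.facet (g (i+1)) (g i) ∧ (g (i+1), g i) ∉ Φ) ∨ (g i, g (i+1)) ∈ Φ := by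
    intro i
    have hr : i % n < n := Nat.mod_lt _ (by omega)
    have h1 : g i = f (i % n) := rfl
    have h2 : g (i + 1) = f (i % n + 1) := by
      have : (i + 1) % n = (i % n + 1) % n := by
        conv_lhs => rw [← Nat.mod_add_mod]
      rcases lt_or_ge (i % n + 1) n with h | h
      · simp [hg, this, Nat.mod_eq_of_lt h]
      · have he : i % n + 1 = n := by omega
        have : (i + 1) % n = 0 := by rw [this, he, Nat.mod_self]
        simp only [hg, this, he, hf0, hfn]
    rw [h1, h2]
    exact hstep _ hr
  -- U and D steps
  set U : ℕ → Prop := fun i => (g i, g (i+1)) ∈ Φ with hU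
  have hdimU : ∀ i, U i → S.dim (g (i+1)) = S.dim (g i) + 1 := by
    intro i hi; exact S.facet_dim _ _ (hΦ.1.1 _ hi)
  have hD : ∀ i, ¬ U i → S.facet (g (i+1)) (g i) ∧ (g (i+1), g i) ∉ Φ := by
    intro i hi; rcases hgstep i with h | h
    · exact h
    · exact absurd h hi
  have hdimD : ∀ i, ¬ U i → S.dim (g i) = S.dim (g (i+1)) + 1 := by
    intro i hi; exact S.facet_dim _ _ (hD i hi).1
  -- U is followed by non-U
  have hUD : ∀ i, U i → ¬ U (i+1) := by
    intro i h1 h2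
    by_cases he : ((g i, g (i+1)) : F × F) = (g (i+1), g (i+2))
    · have he2 : g i = g (i + 1) := congrArg Prod.fst he
      have hd := hdimU i h1
      rw [he2] at hd
      omega
    · exact (hΦ.1.2 _ h1 _ h2 he).2.2.1 rfl
  have hUmod : ∀ i, U (i % n) ↔ U i := by
    intro i
    have h1 : g (i % n) = g i := hgmod i
    have h2 : g (i % n + 1) = g (i + 1) := by
      show f ((i % n + 1) % n) = f ((i + 1) % n)
      congr 1
      conv_rhs => rw [← Nat.mod_add_mod]
    simp [hU, h1, h2]
  -- counting
  set A : Finset ℕ := (Finset.range n).filter U with hA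
  set B : Finset ℕ := (Finset.range n).filter (fun i => ¬ U i) with hB
  have htel : ∑ i ∈ Finset.range n,
      ((S.dim (g (i+1)) : ℤ) - (S.dim (g i) : ℤ)) = 0 := by
    rw [Finset.sum_range_sub (fun i => (S.dim (g i) : ℤ))]
    have : g n = g 0 := by
      have := hgn 0; simpa using this
    rw [this]; ring
  have hsum : ∑ i ∈ Finset.range n,
      ((S.dim (g (i+1)) : ℤ) - (S.dim (g i) : ℤ))
      = ∑ i ∈ Finset.range n, (if U i then (1 : ℤ) else -1) := by
    apply Finset.sum_congr rfl
    intro i _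
    by_cases h : U i
    · rw [if_pos h, hdimU i h]
      push_cast; ring
    · rw [if_neg h, hdimD i h]
      push_cast; ring
  have hsplit : ∑ i ∈ Finset.range n, (if U i then (1 : ℤ) else -1)
      = (A.card : ℤ) - (B.card : ℤ) := by
    rw [← Finset.sum_filter_add_sum_filter_not (Finset.range n) U]
    rw [Finset.sum_congr rfl (fun i hi => if_pos (Finset.mem_filter.mp hi).2),
        Finset.sum_congr rfl (fun i hi => if_neg (Finset.mem_filter.mp hi).2)]
    simp [hA, hB, sub_eq_add_neg]
  have hcard : A.card = B.card := by
    have : (A.card : ℤ) = (B.card : ℤ) := by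
      have := htel; rw [hsum, hsplit] at this; omega
    exact_mod_cast this
  have hcardsum : A.card + B.card = n := by
    rw [hA, hB]
    have := Finset.card_filter_add_card_filter_not (s := Finset.range n) (p := U)
    simpa using this
  -- every non-U step is preceded by a U step
  have hpred : ∀ j, ¬ U (j + 1) → U j := by
    intro j hj
    have hjn : (j + 1) % n < n := Nat.mod_lt _ (by omega)
    have hjB : (j + 1) % n ∈ B := by
      rw [hB, Finset.mem_filter]
      exact ⟨Finset.mem_range.mpr hjn, fun h => hj ((hUmod (j+1)).mp h)⟩
    -- the image of A under (·+1) % n covers B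
    have himg : A.image (fun i => (i + 1) % n) = B := by
      apply Finset.eq_of_subset_of_card_le
      · intro j' hj'
        obtain ⟨i, hiA, hij⟩ := Finset.mem_image.mp hj'
        obtain ⟨hin, hiU⟩ := Finset.mem_filter.mp hiA
        rw [hB, Finset.mem_filter]
        refine ⟨Finset.mem_range.mpr (hij ▸ Nat.mod_lt _ (by omega)), ?_⟩
        intro hUj'
        have : U (i + 1) := (hUmod (i+1)).mp (hij ▸ hUj')
        exact hUD i hiU this
      · rw [← hcard]
        apply le_of_eq
        symm
        apply Finset.card_image_of_injOn
        intro a ha b hb hab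
        simp only [hA, Finset.mem_coe, Finset.mem_filter, Finset.mem_range] at ha hb
        have h1 : Nat.ModEq n (a + 1) (b + 1) := hab
        have h2 : Nat.ModEq n a b := h1.add_right_cancel' 1
        have := h2
        unfold Nat.ModEq at this
        rw [Nat.mod_eq_of_lt ha.1, Nat.mod_eq_of_lt hb.1] at this
        exact this
    obtain ⟨i, hiA, hij⟩ := Finset.mem_image.mp (himg ▸ hjB)
    obtain ⟨hin, hiU⟩ := Finset.mem_filter.mp hiA
    -- i ≡ j [MOD n], so U j
    have h1 : Nat.ModEq n (i + 1) (j + 1) := hij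
    have h2 : Nat.ModEq n i j := h1.add_right_cancel' 1
    have h3 : i % n = j % n := h2
    rw [Nat.mod_eq_of_lt (Finset.mem_range.mp hin)] at h3
    have : U (j % n) := h3 ▸ hiU
    exact (hUmod j).mp this
  -- alternation
  have halt : ∀ j, U (j + 1) ↔ ¬ U j := by
    intro j
    constructor
    · intro h hj; exact hUD j hj h
    · intro h; by_contra h2; exact h (hpred j h2)
  -- starting index with a U step
  obtain ⟨i₀, hi₀1, hi₀U⟩ : ∃ i₀, i₀ ≤ 1 ∧ U i₀ := by
    by_cases h : U 0
    · exact ⟨0, by omega, h⟩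
    · exact ⟨1, le_refl 1, (halt 0).mpr h⟩
  -- all even offsets from i₀ are U steps
  have hUeven : ∀ i, U (i₀ + 2 * i) := by
    intro i
    induction i with
    | zero => simpa using hi₀U
    | succ m ih =>
      have h1 : ¬ U (i₀ + 2 * m + 1) := by
        intro h; exact ((halt (i₀ + 2*m)).mp h) ih
      have h2 : U (i₀ + 2 * m + 1 + 1) := (halt _).mpr h1
      have : i₀ + 2 * (m + 1) = i₀ + 2 * m + 1 + 1 := by ring
      rw [this]; exact h2
  -- n is even, n = 2k with k = A.card ≥ 1
  have hAne : A.Nonempty := by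
    refine ⟨i₀ % n, ?_⟩
    rw [hA, Finset.mem_filter]
    exact ⟨Finset.mem_range.mpr (Nat.mod_lt _ (by omega)), (hUmod i₀).mpr hi₀U⟩
  set k := A.card with hk
  have hk1 : 1 ≤ k := Finset.card_pos.mpr hAne
  have hn2k : n = 2 * k := by omega
  -- build the closed gradient path
  refine hΦ.2 ⟨k, fun i => g (i₀ + 2 * i), fun i => g (i₀ + 2 * i + 1), hk1, ?_, ?_, ?_⟩
  · intro i _
    exact hUeven i
  · intro i _
    have hDstep : ¬ U (i₀ + 2 * i + 1) := fun h => ((halt (i₀ + 2*i)).mp h) (hUeven i)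
    obtain ⟨hfac, hnot⟩ := hD _ hDstep
    have he : i₀ + 2 * i + 1 + 1 = i₀ + 2 * (i + 1) := by ring
    rw [he] at hfac hnot
    refine ⟨?_, hfac⟩
    intro heq
    have heq' : g (i₀ + 2 * (i + 1)) = g (i₀ + 2 * i) := heq
    have hm : (g (i₀ + 2 * i), g (i₀ + 2 * i + 1)) ∈ Φ := hUeven i
    rw [← heq'] at hm
    exact hnot hm
  · show g (i₀ + 2 * 0) = g (i₀ + 2 * k)
    rw [show i₀ + 2 * k = (i₀ + 2 * 0) + n by omega, hgn]
end

section
/- Let C be a regular CW complex that is a closed PL d-manifold and Φ a Morse matching on C. Then the dual matching Φ* = {(Σ*, σ*) : (σ, Σ) ∈ Φ} is a Morse matching on the dual block complex C*, and the map σ ↦ σ* restricts to a bijection between the critical i-faces of Φ and the critical (d−i)-faces of Φ*. -/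
/-- (Poincaré duality for Morse matchings.) Let `S` be the face structure of
a regular CW complex which is a closed PL `d`-manifold, and let `Sd` be the face structure of
its dual block complex: the dual block `σ*` of a face `σ` has dimension `d − dim σ`, and
`σ` is a codimension-one face of `Σ` iff `Σ*` is a codimension-one face of `σ*`. If `Φ` is a
Morse matching on `S`, then the dual matching `Φ* = {(Σ*, σ*) : (σ, Σ) ∈ Φ}` is a Morse
matching on `Sd`, and `σ ↦ σ*` restricts to a bijection between the critical `i`-faces of
`Φ` and the critical `(d − i)`-faces of `Φ*`. -/
theorem stmt11 {F : Type} [Fintype F] [DecidableEq F] (d : ℕ)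
    (S Sd : MorseSetup F)
    (hbound : ∀ x, S.dim x ≤ d)
    (hdual_dim : ∀ x, Sd.dim x = d - S.dim x)
    (hdual_facet : ∀ a b, Sd.facet a b ↔ S.facet b a)
    (Φ : Finset (F × F)) (hΦ : IsMorseMatching S Φ) :
    IsMorseMatching Sd (Φ.image Prod.swap) ∧
      ∀ i ≤ d, ∀ x : F,
        (IsCritical Φ x ∧ S.dim x = i) ↔
          (IsCritical (Φ.image Prod.swap) x ∧ Sd.dim x = d - i) := by

  obtain ⟨⟨hfac, hdisj⟩, hnoc⟩ := hΦ
  have hmem : ∀ q : F × F, q ∈ Φ.image Prod.swap ↔ (q.2, q.1) ∈ Φ := by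
    intro q
    constructor
    · intro h
      obtain ⟨p, hp, hpq⟩ := Finset.mem_image.1 h
      subst hpq; simpa using hp
    · intro h
      refine Finset.mem_image.2 ⟨(q.2, q.1), h, ?_⟩
      simp
  have hdvf : IsDVF Sd (Φ.image Prod.swap) := by
    constructor
    · intro p hp
      exact (hdual_facet p.1 p.2).2 (hfac _ ((hmem p).1 hp))
    · intro p hp q hq hpq
      have hp' := (hmem p).1 hp
      have hq' := (hmem q).1 hq
      have hne : (p.2, p.1) ≠ (q.2, q.1) := by
        intro h
        apply hpq
        have h1 : p.2 = q.2 := congrArg Prod.fst h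
        have h2 : p.1 = q.1 := congrArg Prod.snd h
        exact Prod.ext_iff.2 ⟨h2, h1⟩
      obtain ⟨h1, h2, h3, h4⟩ := hdisj _ hp' _ hq' hne
      exact ⟨h4, h3, h2, h1⟩
  have hnoc' : ¬ HasClosedGradientPath Sd (Φ.image Prod.swap) := by
    rintro ⟨k, σ, T, hk, hΦmem, hstep, hclose⟩
    apply hnoc
    refine ⟨k, fun j => T (k - j), fun j => σ (k - j), hk, ?_, ?_, ?_⟩
    · intro j hj
      exact (hmem _).1 (hΦmem (k - j) (Nat.sub_le _ _))
    · intro j hj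
      have e1 : k - (j + 1) = k - j - 1 := by omega
      set i := k - j - 1 with hi_def
      have e2 : k - j = i + 1 := by omega
      have hik : i < k := by omega
      obtain ⟨hs1, hs2⟩ := hstep i hik
      have hpmem : (σ i, T i) ∈ Φ.image Prod.swap := hΦmem i (le_of_lt hik)
      have hqmem : (σ (i + 1), T (i + 1)) ∈ Φ.image Prod.swap := hΦmem (i + 1) hik
      have hp' := (hmem _).1 hpmem
      have hq' := (hmem _).1 hqmem
      have hTne : T i ≠ T (i + 1) := by
        have hne : ((σ i, T i).2, (σ i, T i).1) ≠ ((σ (i+1), T (i+1)).2, (σ (i+1), T (i+1)).1) := by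
          intro h
          exact hs1 (congrArg Prod.snd h).symm
        exact (hdisj _ hp' _ hq' hne).1
      constructor
      · show T (k - (j + 1)) ≠ T (k - j)
        rw [e1, e2]
        exact fun h => hTne h
      · show S.facet (T (k - (j + 1))) (σ (k - j))
        rw [e1, e2]
        exact (hdual_facet _ _).1 hs2
    · show T (k - 0) = T (k - k)
      simp only [Nat.sub_zero, Nat.sub_self]
      have hp' := (hmem _).1 (hΦmem 0 (Nat.zero_le _))
      have hq' := (hmem _).1 (hΦmem k le_rfl)
      by_contra hTne
      have hne : ((σ 0, T 0).2, (σ 0, T 0).1) ≠ ((σ k, T k).2, (σ k, T k).1) := by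
        intro h
        exact hTne (congrArg Prod.fst h).symm
      exact (hdisj _ hp' _ hq' hne).2.2.2 hclose
  have hcrit : ∀ x, IsCritical Φ x ↔ IsCritical (Φ.image Prod.swap) x := by
    intro x
    constructor
    · intro h p hp
      have := h _ ((hmem p).1 hp)
      exact ⟨this.2, this.1⟩
    · intro h p hp
      have hp' : (p.2, p.1) ∈ Φ.image Prod.swap := (hmem _).2 (by simpa using hp)
      have := h _ hp'
      exact ⟨this.2, this.1⟩
  refine ⟨⟨hdvf, hnoc'⟩, ?_⟩
  intro i hi x
  rw [hdual_dim]
  have hb := hbound x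
  constructor
  · rintro ⟨hc, hd⟩
    exact ⟨(hcrit x).1 hc, by omega⟩
  · rintro ⟨hc, hd⟩
    exact ⟨(hcrit x).2 hc, by omega⟩
end
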